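/- arXiv:2103.02329 — 8 statements merged into one kernel-verified Lean document; each statement's English description precedes it below -/
import Mathlib

section
/- Let K be a number field with ring of integers O_K and let p be a prime number. Then the ideal pO_K is unramified in O_K — that is, no prime ideal P of O_K satisfies P^2 ∣ pO_K — if and only if p does not divide the discriminant Disc(K). -/
/-!
Mathlib's form of Dedekind's discriminant theorem says that `p ∤ Disc(K)` exactly when `(p)` is
unramified in `𝓞 K`, i.e. every prime `P` above `p` has ramification index `1`. In a Dedekind
domain `e(P | p) ≠ 1` means `p 𝓞 K ⊆ P²`, and a prime `P` with `P² ∣ p 𝓞 K` automatically lies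
above the maximal ideal `(p)`.
-/

namespace Ideal

variable {R S : Type*} [CommRing R] [CommRing S] [Algebra R S]

theorem liesOver_of_map_le {p : Ideal R} [p.IsMaximal] {P : Ideal S} [P.IsPrime]
    (h : p.map (algebraMap R S) ≤ P) : P.LiesOver p :=
  ⟨IsMaximal.eq_of_le ‹_› IsPrime.ne_top' (map_le_iff_le_comap.mp h)⟩

theorem ramificationIdx_ne_one_iff_map_le_sq [IsDomain R] [IsDedekindDomain S]
    [Module.IsTorsionFree R S] {p : Ideal R} (hp : p ≠ ⊥) (P : Ideal S) [P.IsPrime]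
    [P.LiesOver p] :
    P.ramificationIdx R ≠ 1 ↔ p.map (algebraMap R S) ≤ P ^ 2 := by
  rw [← ramificationIdx'_eq_ramificationIdx p P hp]
  exact ramificationIdx'_ne_one_iff (map_le_iff_le_comap.mpr LiesOver.over.le)

end Ideal

namespace Algebra

variable {R S : Type*} [CommRing R] [CommRing S] [Algebra R S]

theorem isUnramifiedIn_iff_not_exists_sq_dvd [IsDomain R] [Module.Finite ℤ R] [CharZero R]
    [IsDedekindDomain S] [Module.IsTorsionFree R S] [EssFiniteType R S] [Algebra.IsIntegral R S]
    {p : Ideal R} [p.IsMaximal] (hp : p ≠ ⊥) :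
    IsUnramifiedIn S p ↔ ¬ ∃ P : Ideal S, P.IsPrime ∧ P ^ 2 ∣ p.map (algebraMap R S) := by
  rw [isUnramifiedIn_iff_forall_ramificationIdx_eq_one]
  constructor
  · rintro h ⟨P, hP, hdvd⟩
    have hle := Ideal.le_of_dvd hdvd
    have := Ideal.liesOver_of_map_le (p := p) (hle.trans (Ideal.pow_le_self two_ne_zero))
    exact (Ideal.ramificationIdx_ne_one_iff_map_le_sq hp P).mpr hle (h P this)
  · intro h P _ _
    by_contra hne
    exact h ⟨P, ‹_›,
      Ideal.dvd_iff_le.mpr ((Ideal.ramificationIdx_ne_one_iff_map_le_sq hp P).mp hne)⟩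

end Algebra

theorem stmt_3 (K : Type*) [Field K] [NumberField K] (p : ℕ) (hp : p.Prime) :
    (¬ ∃ P : Ideal (NumberField.RingOfIntegers K), P.IsPrime ∧
        P ^ 2 ∣ Ideal.span {(p : NumberField.RingOfIntegers K)}) ↔
      ¬ (p : ℤ) ∣ NumberField.discr K := by
  have hpZ : Prime (p : ℤ) := Nat.prime_iff_prime_int.mp hp
  have : Fact p.Prime := ⟨hp⟩
  rw [NumberField.not_dvd_discr_iff_isUnramifiedIn K (NumberField.RingOfIntegers K) hpZ,
    Algebra.isUnramifiedIn_iff_not_exists_sq_dvd (Ideal.span_singleton_eq_bot.not.mpr hpZ.ne_zero),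
    Ideal.map_span, Set.image_singleton, map_natCast]
end

section
/- Let d be a squarefree integer with d ≠ 1, and let K be a number field of degree 2 over ℚ that contains an element α with α^2 = d. Then Disc(K) = d if d ≡ 1 (mod 4), and Disc(K) = 4d otherwise. -/
/-!
Write `x ∈ K` as `p + qα` with `p q ∈ ℚ`. If `x` is integral then so are its trace `2p` and
`2p·x - x² = p² - dq²`, hence `d(2q)² = (2p)² - 4(p² - dq²)` is an integer and, `d` being
squarefree, so is `2q`. Reducing `(2p)² ≡ d(2q)² mod 4` shows that `1, (1 + α)/2` is an integral
basis when `d ≡ 1 mod 4` and `1, α` is one otherwise. The trace form on `1, α` has determinant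
`4d`, and passing to `1, (1 + α)/2` multiplies it by `(1/2)²`.
-/

open NumberField Module

theorem Squarefree.exists_intCast_eq_of_mul_sq_eq {d : ℤ} (hd : Squarefree d) {r : ℚ} {k : ℤ}
    (h : d * r ^ 2 = k) : ∃ m : ℤ, (m : ℚ) = r := by
  have hnum : d * r.num ^ 2 = (r.den : ℤ) ^ 2 * k := by
    rw [← Rat.num_div_den r] at h
    field_simp at h
    exact_mod_cast h
  have hcop : IsCoprime ((r.den : ℤ) ^ 2) (r.num ^ 2) :=
    (Int.isCoprime_iff_gcd_eq_one.mpr (by simpa [Int.gcd, Nat.coprime_comm] using r.reduced)).pow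
  have hden : IsUnit (r.den : ℤ) :=
    hd _ (by rw [← sq]; exact hcop.dvd_of_dvd_mul_right ⟨k, hnum⟩)
  rw [Int.isUnit_iff] at hden
  exact ⟨r.num, by exact_mod_cast (Rat.den_eq_one_iff r).mp (by omega)⟩

theorem Squarefree.not_isSquare_intCast {d : ℤ} (hd : Squarefree d) (hd1 : d ≠ 1) :
    ¬ IsSquare (d : ℚ) := by
  rw [Rat.isSquare_intCast_iff]
  rintro ⟨m, rfl⟩
  rcases Int.isUnit_iff.mp (hd m dvd_rfl) with rfl | rfl <;> simp at hd1

theorem Squarefree.notMem_range_algebraMap_of_sq_eq {K : Type*} [Field K] [CharZero K] {d : ℤ}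
    (hd : Squarefree d) (hd1 : d ≠ 1) {α : K} (hα : α ^ 2 = d) :
    α ∉ Set.range (algebraMap ℚ K) := by
  rintro ⟨q, rfl⟩
  refine hd.not_isSquare_intCast hd1 ⟨q, Rat.cast_injective (α := K) ?_⟩
  simpa [← sq] using hα.symm

theorem Int.even_sub_of_two_dvd_sq_sub_mul_sq {d u v : ℤ} (hd : Odd d)
    (h : 2 ∣ u ^ 2 - d * v ^ 2) : Even (u - v) := by
  obtain ⟨e, rfl⟩ := hd
  rcases Int.even_or_odd u with ⟨a, rfl⟩ | ⟨a, rfl⟩ <;>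
    rcases Int.even_or_odd v with ⟨b, rfl⟩ | ⟨b, rfl⟩ <;>
    ring_nf at h ⊢ <;> simp only [even_iff_two_dvd] <;> omega

theorem Int.even_and_even_of_four_dvd_sq_sub_mul_sq {d u v : ℤ} (h1 : d % 4 ≠ 1)
    (h0 : ¬ 4 ∣ d) (h : 4 ∣ u ^ 2 - d * v ^ 2) : Even u ∧ Even v := by
  rcases Int.even_or_odd u with ⟨a, rfl⟩ | ⟨a, rfl⟩ <;>
    rcases Int.even_or_odd v with ⟨b, rfl⟩ | ⟨b, rfl⟩
  · exact ⟨⟨a, rfl⟩, ⟨b, rfl⟩⟩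
  all_goals exfalso; ring_nf at h; omega

theorem exists_intCast_eq_of_isIntegral_ratCast {K : Type*} [Field K] [CharZero K] {q : ℚ}
    (h : IsIntegral ℤ (q : K)) : ∃ m : ℤ, (m : ℚ) = q := by
  rw [← eq_ratCast (algebraMap ℚ K), isIntegral_algebraMap_iff (algebraMap ℚ K).injective] at h
  exact IsIntegrallyClosed.isIntegral_iff.mp h

theorem IsIntegral.of_mem_span {R A ι : Type*} [CommRing R] [CommRing A] [Algebra R A]
    {b : ι → A} (hb : ∀ i, IsIntegral R (b i)) {x : A}
    (hx : x ∈ Submodule.span R (Set.range b)) : IsIntegral R x :=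
  (Submodule.span_le (p := Subalgebra.toSubmodule (integralClosure R A)) |>.mpr
    (Set.range_subset_iff.mpr hb)) hx

theorem Module.Basis.isIntegral_repr_of_mem_span {R S M ι : Type*} [CommRing R] [IsDomain R]
    [Ring S] [Nontrivial S] [AddCommGroup M] [Algebra R S] [Module S M] [Module R M]
    [IsScalarTower R S M] [IsTorsionFree R S] (b : Basis ι S M) {x : M}
    (hx : x ∈ Submodule.span R (Set.range b)) (i : ι) : IsIntegral R (b.repr x i) := by
  obtain ⟨m, hm⟩ := (b.mem_span_iff_repr_mem R x).mp hx i
  exact hm ▸ isIntegral_algebraMap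

theorem NumberField.coe_discr_eq_discr_of_isIntegral_iff {K : Type*} [Field K] [NumberField K]
    {ι : Type*} [Fintype ι] [DecidableEq ι] (b : Basis ι ℚ K)
    (hb : ∀ x : K, IsIntegral ℤ x ↔ x ∈ Submodule.span ℤ (Set.range b)) :
    (discr K : ℚ) = Algebra.discr ℚ b := by
  rw [coe_discr]
  refine Algebra.discr_eq_discr_of_toMatrix_coeff_isIntegral K (fun i j => ?_) (fun i j => ?_)
  · refine (integralBasis K).isIntegral_repr_of_mem_span (R := ℤ) ?_ i
    rw [mem_span_integralBasis]
    exact ⟨⟨b j, (hb _).mpr (Submodule.subset_span ⟨j, rfl⟩)⟩, rfl⟩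
  · refine b.isIntegral_repr_of_mem_span (R := ℤ) ((hb _).mp ?_) i
    rw [integralBasis_apply]
    exact RingOfIntegers.isIntegral_coe _

section QuadraticExtension

variable {F K : Type*} [Field F] [Field K] [Algebra F K] {α : K}

theorem linearIndependent_one_of_notMem_range (hirr : α ∉ Set.range (algebraMap F K)) :
    LinearIndependent F ![1, α] := by
  rw [linearIndependent_fin2]
  refine ⟨fun h => hirr ⟨0, by simpa using h.symm⟩, fun a ha => hirr ⟨a⁻¹, ?_⟩⟩
  simp only [Matrix.cons_val_one, Matrix.cons_val_zero, Algebra.smul_def] at ha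
  rw [map_inv₀, inv_eq_of_mul_eq_one_right ha]

theorem one_add_div_two_notMem_range [NeZero (2 : F)] (hirr : α ∉ Set.range (algebraMap F K)) :
    (1 + α) / 2 ∉ Set.range (algebraMap F K) := by
  rintro ⟨r, hr⟩
  refine hirr ⟨2 * r - 1, ?_⟩
  have h2 : (2 : K) ≠ 0 := by
    rw [← map_ofNat (algebraMap F K) 2]
    exact (map_ne_zero _).mpr two_ne_zero
  rw [map_sub, map_mul, hr, map_ofNat, map_one]
  field_simp
  ring

noncomputable def basisOneOfNotMemRange (hirr : α ∉ Set.range (algebraMap F K))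
    (hK : finrank F K = 2) : Basis (Fin 2) F K :=
  basisOfLinearIndependentOfCardEqFinrank (linearIndependent_one_of_notMem_range hirr)
    (by simp [hK])

@[simp]
theorem coe_basisOneOfNotMemRange (hirr : α ∉ Set.range (algebraMap F K))
    (hK : finrank F K = 2) : ⇑(basisOneOfNotMemRange hirr hK) = ![1, α] :=
  coe_basisOfLinearIndependentOfCardEqFinrank _ _

theorem trace_eq_zero_of_sq_eq_algebraMap (hirr : α ∉ Set.range (algebraMap F K))
    (hK : finrank F K = 2) {c : F} (hc : α ^ 2 = algebraMap F K c) :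
    Algebra.trace F K α = 0 := by
  let B := basisOneOfNotMemRange hirr hK
  have hB0 : B 0 = 1 := by simp [B]
  have hB1 : B 1 = α := by simp [B]
  rw [Algebra.trace_eq_matrix_trace B, Matrix.trace_fin_two, Algebra.leftMulMatrix_eq_repr_mul,
    Algebra.leftMulMatrix_eq_repr_mul, hB0, hB1, mul_one, ← sq, hc, ← mul_one (algebraMap F K c),
    ← Algebra.smul_def, ← hB0, ← hB1, map_smul, B.repr_self, B.repr_self]
  simp

theorem discr_one_of_sq_eq_algebraMap (hirr : α ∉ Set.range (algebraMap F K))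
    (hK : finrank F K = 2) {c : F} (hc : α ^ 2 = algebraMap F K c) :
    Algebra.discr F ![1, α] = 4 * c := by
  have htr := trace_eq_zero_of_sq_eq_algebraMap hirr hK hc
  rw [Algebra.discr_def, Matrix.det_fin_two]
  simp only [Algebra.traceMatrix_apply, Algebra.traceForm_apply, Matrix.cons_val_zero,
    Matrix.cons_val_one, one_mul, mul_one, htr, ← sq, hc, Algebra.trace_algebraMap, hK]
  rw [one_pow, ← map_one (algebraMap F K), Algebra.trace_algebraMap, hK]
  simp only [nsmul_eq_mul]
  ring

theorem discr_one_one_add_div_two_of_sq_eq_algebraMap [NeZero (2 : F)]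
    (hirr : α ∉ Set.range (algebraMap F K)) (hK : finrank F K = 2) {c : F}
    (hc : α ^ 2 = algebraMap F K c) : Algebra.discr F ![1, (1 + α) / 2] = c := by
  have h2 : (2 : K) ≠ 0 := by
    rw [← map_ofNat (algebraMap F K) 2]
    exact (map_ne_zero _).mpr two_ne_zero
  have hvec : ![1, (1 + α) / 2] =
      Matrix.vecMul ![1, α] ((!![1, 1 / 2; 0, 1 / 2] : Matrix (Fin 2) (Fin 2) F).map
        (algebraMap F K)) := by
    ext i; fin_cases i <;> simp [Matrix.vecMul, dotProduct, map_ofNat]; field_simp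
  rw [hvec, Algebra.discr_of_matrix_vecMul, discr_one_of_sq_eq_algebraMap hirr hK hc,
    Matrix.det_fin_two_of]
  field_simp
  ring

end QuadraticExtension

theorem isIntegral_one_add_div_two_of_emod_four_eq_one {K : Type*} [Field K] [NeZero (2 : K)]
    {d : ℤ} (h1 : d % 4 = 1) {α : K} (hα : α ^ 2 = d) : IsIntegral ℤ ((1 + α) / 2) := by
  obtain ⟨e, rfl⟩ : ∃ e, d = 4 * e + 1 := ⟨d / 4, by omega⟩
  refine ⟨Polynomial.X ^ 2 - Polynomial.X - Polynomial.C e, by monicity!, ?_⟩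
  have h2 : (2 : K) ≠ 0 := two_ne_zero
  rw [Polynomial.eval₂_sub, Polynomial.eval₂_sub, Polynomial.eval₂_X_pow, Polynomial.eval₂_X,
    Polynomial.eval₂_C, eq_intCast]
  push_cast at hα
  field_simp
  linear_combination hα

section QuadraticNumberField

variable {K : Type*} [Field K] [NumberField K] {d : ℤ} {α : K}

theorem trace_ratCast_add_mul (hirr : α ∉ Set.range (algebraMap ℚ K)) (hK : finrank ℚ K = 2)
    (hα : α ^ 2 = d) (p q : ℚ) : Algebra.trace ℚ K (p + q * α) = 2 * p := by
  have hc : α ^ 2 = algebraMap ℚ K d := by simpa using hα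
  rw [map_add, ← eq_ratCast (algebraMap ℚ K), ← eq_ratCast (algebraMap ℚ K), ← Algebra.smul_def,
    map_smul, trace_eq_zero_of_sq_eq_algebraMap hirr hK hc, Algebra.trace_algebraMap, hK]
  simp

theorem exists_eq_ratCast_add_mul (hirr : α ∉ Set.range (algebraMap ℚ K))
    (hK : finrank ℚ K = 2) (x : K) : ∃ p q : ℚ, x = p + q * α := by
  let B := basisOneOfNotMemRange hirr hK
  refine ⟨B.repr x 0, B.repr x 1, ?_⟩
  conv_lhs => rw [← B.sum_repr x]
  simp [B, Fin.sum_univ_two, Rat.smul_def]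

theorem exists_intCast_eq_two_mul_of_isIntegral (hd : Squarefree d)
    (hirr : α ∉ Set.range (algebraMap ℚ K)) (hK : finrank ℚ K = 2) (hα : α ^ 2 = d) {p q : ℚ}
    (hx : IsIntegral ℤ ((p : K) + q * α)) :
    ∃ u v : ℤ, (u : ℚ) = 2 * p ∧ (v : ℚ) = 2 * q ∧ 4 ∣ u ^ 2 - d * v ^ 2 := by
  obtain ⟨u, hu⟩ : ∃ u : ℤ, (u : ℚ) = 2 * p := by
    have := Algebra.isIntegral_trace (L := ℚ) hx
    rwa [trace_ratCast_add_mul hirr hK hα, IsIntegrallyClosed.isIntegral_iff] at this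
  obtain ⟨n, hn⟩ : ∃ n : ℤ, (n : ℚ) = p ^ 2 - d * q ^ 2 := by
    refine exists_intCast_eq_of_isIntegral_ratCast (K := K) ?_
    have hnorm : ((p ^ 2 - d * q ^ 2 : ℚ) : K) = u * (p + q * α) - (p + q * α) ^ 2 := by
      have hu' : (u : K) = 2 * p := by exact_mod_cast hu
      push_cast
      linear_combination -(p + q * α) * hu' + q ^ 2 * hα
    rw [hnorm]
    exact (isIntegral_algebraMap.mul hx).sub (hx.pow 2)
  obtain ⟨v, hv⟩ := hd.exists_intCast_eq_of_mul_sq_eq (r := 2 * q) (k := u ^ 2 - 4 * n) (by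
    push_cast
    linear_combination (-((u : ℚ) + 2 * p)) * hu + 4 * hn)
  refine ⟨u, v, hu, hv, n, ?_⟩
  have : (u : ℚ) ^ 2 - d * v ^ 2 = 4 * n := by rw [hu, hv, hn]; ring
  exact_mod_cast this

theorem isIntegral_iff_mem_span_one_of_emod_four_ne_one (hd : Squarefree d) (h1 : d % 4 ≠ 1)
    (hirr : α ∉ Set.range (algebraMap ℚ K)) (hK : finrank ℚ K = 2) (hα : α ^ 2 = d) (x : K) :
    IsIntegral ℤ x ↔ x ∈ Submodule.span ℤ {1, α} := by
  refine ⟨fun hx => ?_, fun hx => ?_⟩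
  · obtain ⟨p, q, rfl⟩ := exists_eq_ratCast_add_mul hirr hK x
    obtain ⟨u, v, hu, hv, h4⟩ := exists_intCast_eq_two_mul_of_isIntegral hd hirr hK hα hx
    have h0 : ¬ 4 ∣ d := fun h => by
      have := hd 2 (by norm_num [h])
      norm_num [Int.isUnit_iff] at this
    obtain ⟨⟨s, rfl⟩, ⟨t, rfl⟩⟩ := Int.even_and_even_of_four_dvd_sq_sub_mul_sq h1 h0 h4
    have hp : (p : K) = s := by push_cast at hu; exact_mod_cast (by linarith : p = s)
    have hq : (q : K) = t := by push_cast at hv; exact_mod_cast (by linarith : q = t)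
    exact Submodule.mem_span_pair.mpr ⟨s, t, by simp [hp, hq, zsmul_eq_mul]⟩
  · refine IsIntegral.of_mem_span (b := ![1, α]) (fun i => ?_)
      (by rwa [Matrix.range_cons_cons_empty])
    fin_cases i
    · exact isIntegral_one
    · exact IsIntegral.of_pow two_pos (hα ▸ isIntegral_algebraMap)

theorem isIntegral_iff_mem_span_one_one_add_div_two_of_emod_four_eq_one (hd : Squarefree d)
    (h1 : d % 4 = 1) (hirr : α ∉ Set.range (algebraMap ℚ K)) (hK : finrank ℚ K = 2)
    (hα : α ^ 2 = d) (x : K) : IsIntegral ℤ x ↔ x ∈ Submodule.span ℤ {1, (1 + α) / 2} := by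
  refine ⟨fun hx => ?_, fun hx => ?_⟩
  · obtain ⟨p, q, rfl⟩ := exists_eq_ratCast_add_mul hirr hK x
    obtain ⟨u, v, hu, hv, h4⟩ := exists_intCast_eq_two_mul_of_isIntegral hd hirr hK hα hx
    obtain ⟨w, hw⟩ := Int.even_sub_of_two_dvd_sq_sub_mul_sq (d := d) (by rw [Int.odd_iff]; omega)
      (dvd_trans (by norm_num) h4)
    have hp : (p : K) = w + v / 2 := by
      have : p = w + v / 2 := by rw [show u = w + w + v by omega] at hu; push_cast at hu; linarith
      exact_mod_cast this
    have hq : (q : K) = v / 2 := by exact_mod_cast (by linarith : q = v / 2)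
    refine Submodule.mem_span_pair.mpr ⟨w, v, ?_⟩
    rw [hp, hq, zsmul_eq_mul, zsmul_eq_mul]
    ring
  · refine IsIntegral.of_mem_span (b := ![1, (1 + α) / 2]) (fun i => ?_)
      (by rwa [Matrix.range_cons_cons_empty])
    fin_cases i
    · exact isIntegral_one
    · exact isIntegral_one_add_div_two_of_emod_four_eq_one h1 hα

end QuadraticNumberField

theorem stmt_4 (d : ℤ) (hd : Squarefree d) (hd1 : d ≠ 1)
    (K : Type*) [Field K] [NumberField K]
    (hdeg : Module.finrank ℚ K = 2)
    (α : K) (hα : α ^ 2 = (d : K)) :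
    NumberField.discr K = if d % 4 = 1 then d else 4 * d := by
  have hirr := hd.notMem_range_algebraMap_of_sq_eq hd1 hα
  have hc : α ^ 2 = algebraMap ℚ K d := by simpa using hα
  split_ifs with h1
  · have hirr' := one_add_div_two_notMem_range hirr
    have := coe_discr_eq_discr_of_isIntegral_iff (basisOneOfNotMemRange hirr' hdeg) (by
      rw [coe_basisOneOfNotMemRange, Matrix.range_cons_cons_empty]
      exact isIntegral_iff_mem_span_one_one_add_div_two_of_emod_four_eq_one hd h1 hirr hdeg hα)
    rw [coe_basisOneOfNotMemRange,
      discr_one_one_add_div_two_of_sq_eq_algebraMap hirr hdeg hc] at this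
    exact_mod_cast this
  · have := coe_discr_eq_discr_of_isIntegral_iff (basisOneOfNotMemRange hirr hdeg) (by
      rw [coe_basisOneOfNotMemRange, Matrix.range_cons_cons_empty]
      exact isIntegral_iff_mem_span_one_of_emod_four_ne_one hd h1 hirr hdeg hα)
    rw [coe_basisOneOfNotMemRange, discr_one_of_sq_eq_algebraMap hirr hdeg hc] at this
    exact_mod_cast this
end

section
/- Every unit of the ring ℤ[√2] has the form ±(1+√2)^n for some integer n; that is, for every unit u of ℤ[√2] there exists n ∈ ℤ such that u = w^n or u = -w^n, where w is the unit 1+√2 (whose inverse is -1+√2, since (1+√2)(-1+√2) = 1), and the n-th power is taken in the unit group of ℤ[√2] (allowing negative n). -/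
/-!
A unit of `ℤ[√2]` has norm `±1`. The units of norm `1` are the solutions of the Pell equation
`x² - 2y² = 1`, whose fundamental solution is `3 + 2√2 = (1 + √2)²`, so they are `±(1 + √2)^(2n)`.
Since `1 + √2` has norm `-1`, multiplying a unit of norm `-1` by it reduces to the first case.
-/

/-- The fundamental unit `1 + √2` of `ℤ[√2]`, with inverse `-1 + √2`. -/
def pellUnit : (ℤ√2)ˣ where
  val := ⟨1, 1⟩
  inv := ⟨-1, 1⟩
  val_inv := by decide
  inv_val := by decide

open Pell Zsqrtd

theorem Zsqrtd.norm_units_eq_one_or_neg_one {d : ℤ} (u : (ℤ√d)ˣ) :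
    (u : ℤ√d).norm = 1 ∨ (u : ℤ√d).norm = -1 :=
  Int.isUnit_iff.mp ((isUnit_iff_norm_isUnit _).mp u.isUnit)

def Pell.Solution₁.toUnits {d : ℤ} : Solution₁ d →* (ℤ√d)ˣ :=
  Unitary.toUnits

theorem Pell.Solution₁.toUnits_neg {d : ℤ} (a : Solution₁ d) : toUnits (-a) = -toUnits a :=
  Units.ext rfl

theorem Pell.IsFundamental.units_eq_zpow_or_neg_zpow {d : ℤ} {a₁ : Solution₁ d}
    (h : IsFundamental a₁) {u : (ℤ√d)ˣ} (hu : (u : ℤ√d).norm = 1) :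
    ∃ n : ℤ, u = Solution₁.toUnits a₁ ^ n ∨ u = -(Solution₁.toUnits a₁ ^ n) := by
  let a : Solution₁ d := ⟨u, norm_eq_one_iff_mem_unitary.mp hu⟩
  have hua : u = Solution₁.toUnits a := Units.ext rfl
  obtain ⟨n, hn | hn⟩ := h.eq_zpow_or_neg_zpow a
  · exact ⟨n, .inl (by rw [hua, hn, map_zpow])⟩
  · exact ⟨n, .inr (by rw [hua, hn, Solution₁.toUnits_neg, map_zpow])⟩

theorem Pell.isFundamental_three_two :
    IsFundamental (Solution₁.mk 3 2 (by norm_num) : Solution₁ 2) := by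
  refine ⟨by simp, by simp, fun {b} hb => ?_⟩
  rw [Solution₁.x_mk]
  by_contra! hlt
  have hx : b.x = 2 := by omega
  have hpell := b.prop
  rw [hx] at hpell
  omega

theorem Pell.Solution₁.toUnits_mk_three_two :
    Solution₁.toUnits (Solution₁.mk 3 2 (by norm_num) : Solution₁ 2) = pellUnit ^ 2 :=
  Units.ext (by decide)

theorem norm_pellUnit : (pellUnit : ℤ√2).norm = -1 := by decide

theorem eq_pellUnit_zpow_or_neg_of_norm_eq_one {u : (ℤ√2)ˣ} (hu : (u : ℤ√2).norm = 1) :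
    ∃ n : ℤ, u = pellUnit ^ n ∨ u = -(pellUnit ^ n) := by
  obtain ⟨n, hn⟩ := isFundamental_three_two.units_eq_zpow_or_neg_zpow hu
  have hpow : (pellUnit ^ 2) ^ n = pellUnit ^ (2 * n) := by rw [zpow_mul, zpow_ofNat]
  rw [Solution₁.toUnits_mk_three_two, hpow] at hn
  exact ⟨2 * n, hn⟩

theorem stmt_5 (u : (ℤ√2)ˣ) :
    ∃ n : ℤ, u = pellUnit ^ n ∨ u = -(pellUnit ^ n) := by
  rcases norm_units_eq_one_or_neg_one u with hu | hu
  · exact eq_pellUnit_zpow_or_neg_of_norm_eq_one hu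
  · have hnorm : ((u * pellUnit : (ℤ√2)ˣ) : ℤ√2).norm = 1 := by
      rw [Units.val_mul, norm_mul, hu, norm_pellUnit]; rfl
    obtain ⟨n, hn⟩ := eq_pellUnit_zpow_or_neg_of_norm_eq_one hnorm
    have hu' : u = u * pellUnit * pellUnit⁻¹ := (mul_inv_cancel_right u pellUnit).symm
    refine ⟨n - 1, ?_⟩
    rw [hu', zpow_sub_one]
    rcases hn with hn | hn
    · exact .inl (by rw [hn])
    · exact .inr (by rw [hn, neg_mul])
end

section
/- Let F be a finite field with q elements and let d ≥ 1 be an integer. Then d times the number of monic irreducible polynomials of degree d in F[X] equals the sum over the positive divisors m of d of μ(d/m)·q^m, where μ is the Möbius function. -/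
/-!
The irreducible monic factors of `X ^ q ^ n - X` over `F` are exactly the monic irreducible
polynomials whose degree divides `n`, and this polynomial is separable, hence squarefree.
Comparing degrees gives `∑_{m ∣ n} m · N_m = q ^ n`, where `N_m` counts the monic irreducible
polynomials of degree `m`; Möbius inversion then yields the formula for `d · N_d`.
-/

open Polynomial UniqueFactorizationMonoid

theorem Polynomial.natDegree_eq_sum_normalizedFactors_toFinset {K : Type*} [Field K]
    [DecidableEq K] {P : K[X]} (hP : Squarefree P) :
    P.natDegree = ∑ g ∈ (normalizedFactors P).toFinset, g.natDegree := by
  have hP0 : P ≠ 0 := hP.ne_zero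
  rw [Finset.sum_eq_multiset_sum, Multiset.toFinset_val,
    ((squarefree_iff_nodup_normalizedFactors hP0).mp hP).dedup,
    ← natDegree_multiset_prod _ (zero_notMem_normalizedFactors _)]
  exact natDegree_eq_of_degree_eq (degree_eq_degree_of_associated (prod_normalizedFactors hP0)).symm

theorem FiniteField.squarefree_X_pow_card_pow_sub_X (F : Type*) [Field F] [Fintype F] {n : ℕ}
    (hn : n ≠ 0) :
    Squarefree (X ^ Fintype.card F ^ n - X : F[X]) := by
  obtain ⟨p, hp⟩ := CharP.exists F
  have : Fact p.Prime := ⟨CharP.char_is_prime F p⟩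
  refine (galois_poly_separable p _ ?_).squarefree
  obtain ⟨s, -, hs⟩ := FiniteField.card F p
  rw [hs, ← pow_mul]
  exact dvd_pow_self p (by positivity)

theorem FiniteField.mem_normalizedFactors_X_pow_card_pow_sub_X (F : Type*) [Field F] [Fintype F]
    [DecidableEq F] {n : ℕ} (hn : n ≠ 0) {g : F[X]} :
    g ∈ normalizedFactors (X ^ Fintype.card F ^ n - X) ↔
      g.Monic ∧ Irreducible g ∧ g.natDegree ∣ n := by
  rw [Polynomial.mem_normalizedFactors_iff
    (FiniteField.X_pow_card_pow_sub_X_ne_zero F hn Fintype.one_lt_card), Fintype.card_eq_nat_card]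
  constructor
  · rintro ⟨hirr, hmon, hdvd⟩
    exact ⟨hmon, hirr, hirr.natDegree_dvd_of_dvd_X_pow_card_pow_sub_X hdvd⟩
  · rintro ⟨hmon, hirr, hdvd⟩
    exact ⟨hirr, hmon, hirr.natDegree_dvd_iff_dvd_X_pow_card_pow_sub_X.mp hdvd⟩

theorem FiniteField.sum_divisors_mul_card_monic_irreducible (F : Type*) [Field F] [Fintype F]
    {n : ℕ} (hn : n ≠ 0) :
    ∑ m ∈ n.divisors, m * Nat.card {f : F[X] // f.Monic ∧ Irreducible f ∧ f.natDegree = m} =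
      Fintype.card F ^ n := by
  classical
  set S := (normalizedFactors (X ^ Fintype.card F ^ n - X : F[X])).toFinset
  have hS {g : F[X]} : g ∈ S ↔ g.Monic ∧ Irreducible g ∧ g.natDegree ∣ n := by
    rw [Multiset.mem_toFinset, FiniteField.mem_normalizedFactors_X_pow_card_pow_sub_X F hn]
  have hfiber {m : ℕ} (hm : m ∣ n) :
      Nat.card {f : F[X] // f.Monic ∧ Irreducible f ∧ f.natDegree = m} =
        (S.filter (·.natDegree = m)).card := by
    rw [← Nat.card_eq_finsetCard]
    refine Nat.card_congr (Equiv.subtypeEquivRight fun f => ?_)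
    simp only [Finset.mem_filter, hS]
    exact ⟨fun ⟨hmon, hirr, hdeg⟩ => ⟨⟨hmon, hirr, hdeg ▸ hm⟩, hdeg⟩,
      fun ⟨⟨hmon, hirr, _⟩, hdeg⟩ => ⟨hmon, hirr, hdeg⟩⟩
  calc ∑ m ∈ n.divisors,
        m * Nat.card {f : F[X] // f.Monic ∧ Irreducible f ∧ f.natDegree = m}
      = ∑ m ∈ n.divisors, ∑ g ∈ S.filter (·.natDegree = m), g.natDegree := by
        refine Finset.sum_congr rfl fun m hm => ?_
        rw [hfiber (Nat.dvd_of_mem_divisors hm), Finset.sum_congr rfl fun g hg =>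
          (Finset.mem_filter.mp hg).2, Finset.sum_const, smul_eq_mul, mul_comm]
    _ = ∑ g ∈ S, g.natDegree :=
        Finset.sum_fiberwise_of_maps_to (fun g hg =>
          Nat.mem_divisors.mpr ⟨(hS.mp hg).2.2, hn⟩) natDegree
    _ = Fintype.card F ^ n := by
        rw [← natDegree_eq_sum_normalizedFactors_toFinset
          (FiniteField.squarefree_X_pow_card_pow_sub_X F hn),
          FiniteField.X_pow_card_pow_sub_X_natDegree_eq F hn Fintype.one_lt_card]

theorem stmt_6 (F : Type*) [Field F] [Fintype F] (q : ℕ) (hq : Fintype.card F = q)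
    (d : ℕ) (hd : 1 ≤ d) :
    (d : ℤ) * Nat.card {f : Polynomial F // f.Monic ∧ Irreducible f ∧ f.natDegree = d} =
      ∑ m ∈ d.divisors, ArithmeticFunction.moebius (d / m) * (q : ℤ) ^ m := by
  subst hq
  have hinv := (ArithmeticFunction.sum_eq_iff_sum_mul_moebius_eq (R := ℤ)
    (f := fun m => m * Nat.card {f : F[X] // f.Monic ∧ Irreducible f ∧ f.natDegree = m})
    (g := fun n => Fintype.card F ^ n)).mp
    (fun n hn => mod_cast FiniteField.sum_divisors_mul_card_monic_irreducible F hn.ne') d hd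
  rw [← hinv]
  simp only [Int.cast_id]
  exact Nat.sum_divisorsAntidiagonal' fun a b =>
    ArithmeticFunction.moebius a * (Fintype.card F : ℤ) ^ b
end

section
/- The Prime Number Theorem is equivalent to the statement ψ(n) ~ n; precisely, π(n)·log(n)/n tends to 1 as n → ∞ if and only if ψ(n)/n tends to 1 as n → ∞, where ψ(n) = Σ_{m ≤ n} Λ(m) is the Chebyshev function. -/
/-!
Both normalised counting functions are within `o(1)` of `θ(x)/x`, where `θ(x) = ∑_{p ≤ x} log p`:
`ψ(x) - θ(x) = O(√x)`, since prime powers `p^k` with `k ≥ 2` only occur for `p ≤ √x`, and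
`π(x) - θ(x)/log x = O(x / log² x)` by partial summation.
-/

open Filter Real Asymptotics Chebyshev Topology

theorem tendsto_nhds_iff_of_tendsto_sub_zero {ι G : Type*} [AddCommGroup G] [TopologicalSpace G]
    [IsTopologicalAddGroup G] {l : Filter ι} {f g : ι → G} {a : G}
    (h : Tendsto (fun i ↦ f i - g i) l (𝓝 0)) :
    Tendsto f l (𝓝 a) ↔ Tendsto g l (𝓝 a) :=
  ⟨fun hf ↦ by simpa using hf.sub h, fun hg ↦ by simpa using hg.add h⟩

theorem isLittleO_sqrt_id_atTop : Real.sqrt =o[atTop] id := by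
  refine (isLittleO_iff_tendsto fun x hx ↦ by simp [show x = 0 from hx]).2 ?_
  refine (tendsto_inv_atTop_zero.comp tendsto_sqrt_atTop).congr' ?_
  filter_upwards with x
  simp [sqrt_div_self']

theorem tendsto_psi_div_sub_theta_div :
    Tendsto (fun x ↦ ψ x / x - θ x / x) atTop (𝓝 0) := by
  simpa only [Pi.sub_apply, id_eq, sub_div] using
    (isBigO_psi_sub_theta_sqrt.trans_isLittleO isLittleO_sqrt_id_atTop).tendsto_div_nhds_zero

theorem tendsto_primeCounting_mul_log_div_sub_theta_div :
    Tendsto (fun x ↦ Nat.primeCounting ⌊x⌋₊ * log x / x - θ x / x) atTop (𝓝 0) := by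
  have hO := primeCounting_sub_theta_div_log_isBigO.mul (isBigO_refl (fun x ↦ log x / x) atTop)
  refine (hO.congr' ?_ ?_).trans_tendsto tendsto_log_atTop.inv_tendsto_atTop
  · filter_upwards [eventually_gt_atTop 1] with x hx
    field_simp [(log_pos hx).ne']
  · filter_upwards [eventually_gt_atTop 1] with x hx
    rw [Pi.inv_apply]
    field_simp [(log_pos hx).ne']

theorem sum_Icc_vonMangoldt_eq_psi (n : ℕ) :
    ∑ m ∈ Finset.Icc 1 n, ArithmeticFunction.vonMangoldt m = ψ n := by
  simp [psi, ← Finset.Icc_add_one_left_eq_Ioc]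

theorem stmt_8 :
    Filter.Tendsto (fun n : ℕ => (Nat.primeCounting n : ℝ) * Real.log n / n)
        Filter.atTop (nhds 1) ↔
      Filter.Tendsto (fun n : ℕ =>
          (∑ m ∈ Finset.Icc 1 n, ArithmeticFunction.vonMangoldt m) / (n : ℝ))
        Filter.atTop (nhds 1) := by
  have hπ := tendsto_primeCounting_mul_log_div_sub_theta_div.comp tendsto_natCast_atTop_atTop
  have hψ := tendsto_psi_div_sub_theta_div.comp tendsto_natCast_atTop_atTop
  simp only [Function.comp_def, Nat.floor_natCast] at hπ hψ
  simp only [sum_Icc_vonMangoldt_eq_psi]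
  rw [tendsto_nhds_iff_of_tendsto_sub_zero hπ, tendsto_nhds_iff_of_tendsto_sub_zero hψ]
end

section
/- For every integer n ≥ 1, the number of ideals I of the Gaussian integers ℤ[i] with absolute norm N(I) = n equals Σ_{d ∣ n} χ₄(d), the sum taken over the positive divisors d of n, where χ₄ is the nontrivial Dirichlet character modulo 4 (χ₄(d) = 1 if d ≡ 1 mod 4, χ₄(d) = -1 if d ≡ 3 mod 4, and χ₄(d) = 0 if d is even). This identity is the coefficient-wise form of the factorization ζ_{ℚ(i)}(s) = ζ(s)·L(χ₄, s) of the Dedekind zeta function of ℚ(i). -/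
/-
The ideal count `n ↦ #{I ⊆ ℤ[i] : N(I) = n}` and `n ↦ ∑_{d ∣ n} χ₄(d)` are both multiplicative:
for coprime `m`, `n`, an ideal `I` of norm `m n` factors uniquely as `(I + (m)) (I + (n))`, with
factors of norms `m` and `n`. So it suffices to compare them at prime powers `p ^ k`, where
`∑_{i ≤ k} χ₄(p) ^ i` matches the splitting of `p` in `ℤ[i]`: `2 = -i (1 + i) ^ 2` ramifies
(one ideal of each norm `2 ^ k`), `p ≡ 3 mod 4` stays prime with norm `p ^ 2` (one ideal if `k`
is even, none otherwise), and `p ≡ 1 mod 4` splits as `π π̄` into non-associate primes of norm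
`p` (the `k + 1` ideals `(π) ^ i (π̄) ^ (k - i)`).
-/

open Ideal ArithmeticFunction Finset
open scoped ArithmeticFunction.zeta

theorem Ideal.span_natCast_sup_span_natCast_eq_top {R : Type*} [CommRing R] {m n : ℕ}
    (h : m.Coprime n) : span {(m : R)} ⊔ span {(n : R)} = ⊤ := by
  rw [← isCoprime_iff_sup_eq, isCoprime_span_singleton_iff]
  simpa only [map_natCast] using (Nat.Coprime.isCoprime h).map (Int.castRingHom R)

section PrimePowers

variable {M : Type*} [CommMonoidWithZero M] [IsCancelMulZero M] [Subsingleton Mˣ] {p q : M}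

theorem exists_eq_pow_of_dvd_prime_pow (hp : Prime p) {n : ℕ} (h : q ∣ p ^ n) :
    ∃ i ≤ n, q = p ^ i := by
  simpa only [associated_iff_eq] using (dvd_prime_pow hp n).mp h

theorem emultiplicity_pow_mul_pow (hp : Prime p) (hq : Prime q) (hpq : p ≠ q) (i j : ℕ) :
    emultiplicity p (p ^ i * q ^ j) = i := by
  have hpqj : ¬ p ∣ q ^ j := fun h =>
    hpq (associated_iff_eq.mp (hp.associated_of_dvd hq (hp.dvd_of_dvd_pow h)))
  rw [emultiplicity_mul hp, emultiplicity_pow_self_of_prime hp, emultiplicity_eq_zero.mpr hpqj,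
    add_zero]

theorem pow_mul_pow_injective (hp : Prime p) (hq : Prime q) (hpq : p ≠ q) :
    Function.Injective fun x : ℕ × ℕ => p ^ x.1 * q ^ x.2 := by
  rintro ⟨i, j⟩ ⟨i', j'⟩ h
  have hi := emultiplicity_pow_mul_pow hp hq hpq i j
  have hj := emultiplicity_pow_mul_pow hq hp hpq.symm j i
  simp only at h
  rw [h, emultiplicity_pow_mul_pow hp hq hpq, Nat.cast_inj] at hi
  rw [mul_comm, h, mul_comm, emultiplicity_pow_mul_pow hq hp hpq.symm, Nat.cast_inj] at hj
  rw [hi, hj]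

end PrimePowers

theorem Nat.card_subtype_mul_eq {f k : ℕ} (hf : f ≠ 0) :
    Nat.card {i : ℕ // f * i = k} = if f ∣ k then 1 else 0 := by
  split_ifs with h
  · obtain ⟨j, rfl⟩ := h
    have : Unique {i : ℕ // f * i = f * j} :=
      ⟨⟨j, rfl⟩, fun i => Subtype.ext (Nat.eq_of_mul_eq_mul_left (Nat.pos_of_ne_zero hf) i.2)⟩
    exact Nat.card_unique
  · have : IsEmpty {i : ℕ // f * i = k} := ⟨fun i => h ⟨i, i.2.symm⟩⟩
    exact Nat.card_of_isEmpty

section Multiplicativity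

variable {S : Type*} [CommRing S] [IsDedekindDomain S] [Module.Free ℤ S] {m n : ℕ}

theorem Ideal.sup_span_natCast_mul_sup_span_natCast {I : Ideal S} (h : m.Coprime n)
    (hI : absNorm I = m * n) : (I ⊔ span {(m : S)}) * (I ⊔ span {(n : S)}) = I := by
  refine le_antisymm ?_ ?_
  · rw [sup_mul, mul_sup, mul_sup, span_singleton_mul_span_singleton, ← Nat.cast_mul, ← hI]
    exact sup_le (sup_le mul_le_left mul_le_left) (sup_le mul_le_right (span_singleton_absNorm_le I))
  · rw [mul_eq_inf_of_coprime (by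
      rw [sup_sup_sup_comm, sup_idem, span_natCast_sup_span_natCast_eq_top h, sup_top_eq])]
    exact le_inf le_sup_left le_sup_left

theorem Ideal.absNorm_sup_span_natCast_dvd [Module.Finite ℤ S] {I : Ideal S} (h : m.Coprime n)
    (hI : absNorm I = m * n) : absNorm (I ⊔ span {(m : S)}) ∣ m := by
  have hdvd_pow : absNorm (I ⊔ span {(m : S)}) ∣ m ^ Module.finrank ℤ S :=
    absNorm_span_natCast (S := S) m ▸ absNorm_dvd_absNorm_of_le le_sup_right
  exact (Nat.Coprime.coprime_dvd_left hdvd_pow (h.pow_left _)).dvd_of_dvd_mul_right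
    (hI ▸ absNorm_dvd_absNorm_of_le le_sup_left)

theorem Ideal.absNorm_sup_span_natCast [Module.Finite ℤ S] {I : Ideal S} (h : m.Coprime n)
    (hI : absNorm I = m * n) (hm : m ≠ 0) (hn : n ≠ 0) : absNorm (I ⊔ span {(m : S)}) = m := by
  have hprod := congrArg absNorm (sup_span_natCast_mul_sup_span_natCast h hI)
  rw [map_mul, hI] at hprod
  have hdvd_m := absNorm_sup_span_natCast_dvd h hI
  have hdvd_n := absNorm_sup_span_natCast_dvd h.symm (hI.trans (mul_comm m n))
  have hpos_n : 0 < absNorm (I ⊔ span {(n : S)}) :=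
    Nat.pos_of_ne_zero (right_ne_zero_of_mul (hprod ▸ mul_ne_zero hm hn))
  -- the two norms divide `m` and `n` and multiply to `m * n`
  exact ((mul_eq_mul_iff_eq_and_eq_of_pos' (Nat.le_of_dvd (Nat.pos_of_ne_zero hm) hdvd_m)
    (Nat.le_of_dvd (Nat.pos_of_ne_zero hn) hdvd_n) (Nat.pos_of_ne_zero hm) hpos_n).mp hprod).1

theorem Ideal.mul_sup_span_natCast {I J : Ideal S} (h : m.Coprime n) (hI : absNorm I = m)
    (hJ : absNorm J = n) : I * J ⊔ span {(m : S)} = I := by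
  refine le_antisymm (sup_le mul_le_left (hI ▸ span_singleton_absNorm_le I)) ?_
  have hJm : J ⊔ span {(m : S)} = ⊤ := eq_top_iff.mpr <|
    span_natCast_sup_span_natCast_eq_top (R := S) h.symm ▸
      sup_le_sup_right (hJ ▸ span_singleton_absNorm_le J) _
  calc I = I * (J ⊔ span {(m : S)}) := by rw [hJm, mul_top]
    _ = I * J ⊔ I * span {(m : S)} := mul_sup _ _ _
    _ ≤ I * J ⊔ span {(m : S)} := sup_le_sup_left mul_le_right _

noncomputable def Ideal.absNormMulEquiv [Module.Finite ℤ S] (h : m.Coprime n) (hm : m ≠ 0)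
    (hn : n ≠ 0) :
    {I : Ideal S // absNorm I = m * n} ≃
      {I : Ideal S // absNorm I = m} × {I : Ideal S // absNorm I = n} where
  toFun I := (⟨I.1 ⊔ span {(m : S)}, absNorm_sup_span_natCast h I.2 hm hn⟩,
    ⟨I.1 ⊔ span {(n : S)}, absNorm_sup_span_natCast h.symm (I.2.trans (mul_comm m n)) hn hm⟩)
  invFun P := ⟨P.1.1 * P.2.1, by rw [map_mul, P.1.2, P.2.2]⟩
  left_inv I := Subtype.ext (sup_span_natCast_mul_sup_span_natCast h I.2)
  right_inv := by
    rintro ⟨⟨I, hI⟩, ⟨J, hJ⟩⟩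
    ext : 2
    · exact mul_sup_span_natCast h hI hJ
    · exact (congrArg (· ⊔ _) (mul_comm I J)).trans (mul_sup_span_natCast h.symm hJ hI)

end Multiplicativity

variable (S : Type*) [CommRing S] [IsDedekindDomain S] [Module.Free ℤ S] in
/-- Set to `0` at `n = 0`, where the count would be `1` (the zero ideal). -/
noncomputable def idealCount : ArithmeticFunction ℤ :=
  toArithmeticFunction fun n => Nat.card {I : Ideal S // absNorm I = n}

section IdealCount

variable {S : Type*} [CommRing S] [IsDedekindDomain S] [Module.Free ℤ S]

theorem idealCount_apply {n : ℕ} (hn : n ≠ 0) :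
    idealCount S n = Nat.card {I : Ideal S // absNorm I = n} := by
  simp [idealCount, toArithmeticFunction, hn]

theorem isMultiplicative_idealCount [Module.Finite ℤ S] : (idealCount S).IsMultiplicative := by
  refine IsMultiplicative.iff_ne_zero.mpr ⟨?_, fun {m n} hm hn h => ?_⟩
  · simp [idealCount_apply one_ne_zero, absNorm_eq_one_iff]
  · rw [idealCount_apply (mul_ne_zero hm hn), idealCount_apply hm, idealCount_apply hn,
      Nat.card_congr (absNormMulEquiv h hm hn), Nat.card_prod, Nat.cast_mul]

end IdealCount

section PrimePower

variable {S : Type*} [CommRing S] [IsDedekindDomain S] [Module.Free ℤ S] {p k : ℕ}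

theorem Ideal.dvd_span_natCast_pow_of_absNorm_eq {I : Ideal S} (hI : absNorm I = p ^ k) :
    I ∣ span {(p : S)} ^ k := by
  rw [dvd_iff_le, span_singleton_pow, ← Nat.cast_pow, ← hI]
  exact span_singleton_absNorm_le I

theorem Ideal.absNorm_eq_prime_pow_iff_of_span_eq_pow {P : Ideal S} {e f : ℕ} (hp : p.Prime)
    (hP : Prime P) (hpP : span {(p : S)} = P ^ e) (hNP : absNorm P = p ^ f) {I : Ideal S} :
    absNorm I = p ^ k ↔ ∃ i, f * i = k ∧ P ^ i = I := by
  constructor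
  · intro hI
    have hdvd := dvd_span_natCast_pow_of_absNorm_eq hI
    rw [hpP, ← pow_mul] at hdvd
    obtain ⟨i, -, rfl⟩ := exists_eq_pow_of_dvd_prime_pow hP hdvd
    refine ⟨i, (pow_right_inj₀ hp.pos hp.ne_one).mp ?_, rfl⟩
    rw [pow_mul, ← hNP, ← map_pow, hI]
  · rintro ⟨i, rfl, rfl⟩
    rw [map_pow, hNP, pow_mul]

theorem Ideal.card_absNorm_eq_prime_pow_of_span_eq_pow {P : Ideal S} {e f : ℕ} (hp : p.Prime)
    (hP : Prime P) (hpP : span {(p : S)} = P ^ e) (hNP : absNorm P = p ^ f) :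
    Nat.card {I : Ideal S // absNorm I = p ^ k} = Nat.card {i : ℕ // f * i = k} := by
  have hset : {I : Ideal S | absNorm I = p ^ k} = (P ^ ·) '' {i | f * i = k} := by
    ext I
    simp [absNorm_eq_prime_pow_iff_of_span_eq_pow hp hP hpP hNP]
  exact (Nat.card_congr (Equiv.setCongr hset)).trans
    (Nat.card_image_of_injective (pow_injective_of_not_isUnit hP.not_isUnit hP.ne_zero) _)

theorem Ideal.absNorm_eq_prime_pow_iff_of_span_eq_mul {P Q : Ideal S} (hp : p.Prime)
    (hP : Prime P) (hQ : Prime Q) (hpPQ : span {(p : S)} = P * Q) (hNP : absNorm P = p)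
    (hNQ : absNorm Q = p) {I : Ideal S} :
    absNorm I = p ^ k ↔ ∃ x ∈ antidiagonal k, P ^ x.1 * Q ^ x.2 = I := by
  constructor
  · intro hI
    have hdvd := dvd_span_natCast_pow_of_absNorm_eq hI
    rw [hpPQ, mul_pow] at hdvd
    obtain ⟨I₁, I₂, hI₁, hI₂, rfl⟩ := exists_dvd_and_dvd_of_dvd_mul hdvd
    obtain ⟨i, -, rfl⟩ := exists_eq_pow_of_dvd_prime_pow hP hI₁
    obtain ⟨j, -, rfl⟩ := exists_eq_pow_of_dvd_prime_pow hQ hI₂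
    refine ⟨(i, j), mem_antidiagonal.mpr ((pow_right_inj₀ hp.pos hp.ne_one).mp ?_), rfl⟩
    rw [← hI, map_mul, map_pow, map_pow, hNP, hNQ, pow_add]
  · rintro ⟨⟨i, j⟩, hij, rfl⟩
    rw [map_mul, map_pow, map_pow, hNP, hNQ, ← pow_add, mem_antidiagonal.mp hij]

theorem Ideal.card_absNorm_eq_prime_pow_of_span_eq_mul {P Q : Ideal S} (hp : p.Prime)
    (hP : Prime P) (hQ : Prime Q) (hPQ : P ≠ Q) (hpPQ : span {(p : S)} = P * Q)
    (hNP : absNorm P = p) (hNQ : absNorm Q = p) :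
    Nat.card {I : Ideal S // absNorm I = p ^ k} = k + 1 := by
  have hset : {I : Ideal S | absNorm I = p ^ k} =
      (fun x : ℕ × ℕ => P ^ x.1 * Q ^ x.2) '' (antidiagonal k : Set (ℕ × ℕ)) := by
    ext I
    simp [absNorm_eq_prime_pow_iff_of_span_eq_mul hp hP hQ hpPQ hNP hNQ]
  refine (Nat.card_congr (Equiv.setCongr hset)).trans ?_
  rw [Nat.card_image_of_injective (pow_mul_pow_injective hP hQ hPQ), Nat.card_coe_set_eq,
    Set.ncard_coe_finset, Nat.card_antidiagonal]

end PrimePower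

namespace GaussianInt

open Zsqrtd

noncomputable def basisOneI : Module.Basis (Fin 2) ℤ GaussianInt :=
  Module.Basis.ofEquivFun
    { toFun := fun x => ![x.re, x.im]
      invFun := fun f => ⟨f 0, f 1⟩
      map_add' := fun x y => by ext i; fin_cases i <;> rfl
      map_smul' := fun c x => by ext i; fin_cases i <;> simp
      left_inv := fun x => rfl
      right_inv := fun f => by ext i; fin_cases i <;> rfl }

@[simp] theorem basisOneI_repr (x : GaussianInt) : basisOneI.repr x = ![x.re, x.im] := by
  ext i; rfl

@[simp] theorem basisOneI_zero : basisOneI 0 = 1 := by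
  rw [basisOneI, Module.Basis.coe_ofEquivFun]; rfl

@[simp] theorem basisOneI_one : basisOneI 1 = ⟨0, 1⟩ := by
  rw [basisOneI, Module.Basis.coe_ofEquivFun]; rfl

instance : Module.Free ℤ GaussianInt := .of_basis basisOneI

instance : Module.Finite ℤ GaussianInt := .of_basis basisOneI

theorem algebraNorm_eq_norm (x : GaussianInt) : Algebra.norm ℤ x = x.norm := by
  rw [Algebra.norm_eq_matrix_det basisOneI, Matrix.det_fin_two]
  simp [Algebra.leftMulMatrix_eq_repr_mul, Zsqrtd.norm]

theorem absNorm_span_singleton (x : GaussianInt) : absNorm (span {x}) = x.norm.natAbs := by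
  rw [Ideal.absNorm_span_singleton, algebraNorm_eq_norm]

theorem prime_span_singleton_of_prime_norm {x : GaussianInt} (hx : x.norm.natAbs.Prime) :
    Prime (span {x}) := by
  refine prime_span_singleton_iff.mpr (prime_of_irreducible_absNorm_span ?_ ?_)
  · rintro rfl
    exact Nat.not_prime_zero (by simpa using hx)
  · rwa [absNorm_span_singleton]

-- `(1 + i) ^ 2 = 2 * i`
theorem span_two_eq_sq : span {((2 : ℕ) : GaussianInt)} = span {⟨1, 1⟩} ^ 2 := by
  rw [span_singleton_pow, span_singleton_eq_span_singleton]
  exact ⟨⟨⟨0, 1⟩, ⟨0, -1⟩, by decide, by decide⟩, by decide⟩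

theorem not_dvd_star_of_norm_eq_prime {π : GaussianInt} {p : ℕ} (hp : p.Prime) (hp2 : p ≠ 2)
    (hπ : π.norm = p) : ¬ π ∣ star π := by
  intro h
  have hp' : Prime (p : ℤ) := Nat.prime_iff_prime_int.mp hp
  have hp4 : ¬ (p : ℤ) ∣ 2 * 2 := fun h4 =>
    hp2 ((Nat.prime_dvd_prime_iff_eq hp Nat.prime_two).mp
      ((hp.dvd_mul.mp (by exact_mod_cast h4)).elim id id))
  have hdvd_norm {y : GaussianInt} (hy : π ∣ y) : (p : ℤ) ∣ y.norm :=
    hπ ▸ map_dvd normMonoidHom hy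
  -- `π ± star π` are `2 re π` and `2 i im π`, so `p` divides both coordinates of `π`,
  -- whence `p ^ 2 ∣ N π = p`
  have hre : (p : ℤ) ∣ π.re := by
    have h' := hdvd_norm (dvd_add dvd_rfl h)
    rw [show (π + star π).norm = (2 * 2) * (π.re * π.re) by simp [Zsqrtd.norm_def]; ring] at h'
    exact (hp'.dvd_or_dvd ((hp'.dvd_or_dvd h').resolve_left hp4)).elim id id
  have him : (p : ℤ) ∣ π.im := by
    have h' := hdvd_norm (dvd_sub dvd_rfl h)
    rw [show (π - star π).norm = (2 * 2) * (π.im * π.im) by simp [Zsqrtd.norm_def]; ring] at h'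
    exact (hp'.dvd_or_dvd ((hp'.dvd_or_dvd h').resolve_left hp4)).elim id id
  have hsq : (p : ℤ) * p ∣ π.norm := by
    rw [Zsqrtd.norm_def]
    simpa using dvd_add (mul_dvd_mul hre hre) (mul_dvd_mul him him)
  rw [hπ] at hsq
  exact hp'.not_isUnit
    (isUnit_of_dvd_one ((mul_dvd_mul_iff_left hp'.ne_zero).mp (by rwa [mul_one])))

theorem exists_span_natCast_eq_mul_of_mod_four_eq_one {p : ℕ} (hp : p.Prime) (hp1 : p % 4 = 1) :
    ∃ P Q : Ideal GaussianInt, Prime P ∧ Prime Q ∧ P ≠ Q ∧ span {(p : GaussianInt)} = P * Q ∧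
      absNorm P = p ∧ absNorm Q = p := by
  have := Fact.mk hp
  obtain ⟨a, b, hab⟩ := Nat.Prime.sq_add_sq (p := p) (by omega)
  set π : GaussianInt := ⟨a, b⟩
  have hπ : π.norm = p := by simp [π, Zsqrtd.norm_def, ← hab]; ring
  have hπ' : (star π).norm = p := (norm_conj π).trans hπ
  have hnatAbs {x : GaussianInt} (hx : x.norm = p) : x.norm.natAbs = p := by
    rw [hx, Int.natAbs_natCast]
  refine ⟨span {π}, span {star π}, prime_span_singleton_of_prime_norm (hnatAbs hπ ▸ hp),
    prime_span_singleton_of_prime_norm (hnatAbs hπ' ▸ hp), fun h => ?_, ?_,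
    by rw [absNorm_span_singleton, hnatAbs hπ], by rw [absNorm_span_singleton, hnatAbs hπ']⟩
  · exact not_dvd_star_of_norm_eq_prime hp (by omega) hπ
      (span_singleton_eq_span_singleton.mp h).dvd
  · rw [span_singleton_mul_span_singleton, ← norm_eq_mul_conj, hπ, Int.cast_natCast]

theorem idealCount_two_pow (k : ℕ) : idealCount GaussianInt (2 ^ k) = 1 := by
  have hP : Prime (span {(⟨1, 1⟩ : GaussianInt)}) := prime_span_singleton_of_prime_norm (by decide)
  have hNP : absNorm (span {(⟨1, 1⟩ : GaussianInt)}) = 2 ^ 1 := by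
    rw [absNorm_span_singleton]; rfl
  rw [idealCount_apply (by positivity),
    card_absNorm_eq_prime_pow_of_span_eq_pow Nat.prime_two hP span_two_eq_sq hNP,
    Nat.card_subtype_mul_eq one_ne_zero]
  simp

theorem idealCount_prime_pow_of_mod_four_eq_three {p : ℕ} (hp : p.Prime) (hp3 : p % 4 = 3)
    (k : ℕ) : idealCount GaussianInt (p ^ k) = if Even k then 1 else 0 := by
  have := Fact.mk hp
  have hP : Prime (span {(p : GaussianInt)}) :=
    prime_span_singleton_iff.mpr (prime_of_nat_prime_of_mod_four_eq_three p hp3)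
  have hNP : absNorm (span {(p : GaussianInt)}) = p ^ 2 := by
    rw [absNorm_span_singleton, norm_natCast, Int.natAbs_mul, Int.natAbs_natCast, sq]
  rw [idealCount_apply (pow_ne_zero _ hp.ne_zero),
    card_absNorm_eq_prime_pow_of_span_eq_pow hp hP (pow_one _).symm hNP,
    Nat.card_subtype_mul_eq two_ne_zero]
  simp [even_iff_two_dvd]

theorem idealCount_prime_pow_of_mod_four_eq_one {p : ℕ} (hp : p.Prime) (hp1 : p % 4 = 1)
    (k : ℕ) : idealCount GaussianInt (p ^ k) = k + 1 := by
  obtain ⟨P, Q, hP, hQ, hPQ, hpPQ, hNP, hNQ⟩ := exists_span_natCast_eq_mul_of_mod_four_eq_one hp hp1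
  rw [idealCount_apply (pow_ne_zero _ hp.ne_zero),
    card_absNorm_eq_prime_pow_of_span_eq_mul hp hP hQ hPQ hpPQ hNP hNQ]
  norm_cast

theorem idealCount_eq_zeta_mul_χ₄ :
    idealCount GaussianInt = (ζ : ArithmeticFunction ℤ) * toArithmeticFunction (ZMod.χ₄ ·) := by
  refine (IsMultiplicative.eq_iff_eq_on_prime_powers _ isMultiplicative_idealCount _
    (isMultiplicative_zeta.natCast.mul
      (DirichletCharacter.isMultiplicative_toArithmeticFunction ZMod.χ₄))).mpr fun p k hp => ?_
  have hχ (i : ℕ) : toArithmeticFunction (ZMod.χ₄ ·) (p ^ i) = ZMod.χ₄ p ^ i := by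
    rw [← DirichletCharacter.apply_eq_toArithmeticFunction_apply ZMod.χ₄ (pow_ne_zero i hp.ne_zero),
      Nat.cast_pow, map_pow]
  rw [coe_zeta_mul_apply, Nat.sum_divisors_prime_pow hp]
  simp only [hχ]
  rcases hp.eq_two_or_odd with rfl | hodd
  · simp [idealCount_two_pow]
  rcases Nat.odd_mod_four_iff.mp hodd with hp1 | hp3
  · simp [idealCount_prime_pow_of_mod_four_eq_one hp hp1, ZMod.χ₄_nat_one_mod_four hp1]
  · rw [idealCount_prime_pow_of_mod_four_eq_three hp hp3, ZMod.χ₄_nat_three_mod_four hp3,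
      neg_one_geom_sum]
    by_cases hk : Even k <;> simp [hk, Nat.even_add_one]

end GaussianInt

theorem stmt_9 (n : ℕ) (hn : 1 ≤ n) :
    (Nat.card {I : Ideal GaussianInt // Nat.card (GaussianInt ⧸ I) = n} : ℤ) =
      ∑ d ∈ n.divisors, ZMod.χ₄ (d : ZMod 4) := by
  have h := DFunLike.congr_fun GaussianInt.idealCount_eq_zeta_mul_χ₄ n
  rw [idealCount_apply (by omega), coe_zeta_mul_apply] at h
  simp only [absNorm_apply, Submodule.cardQuot_apply] at h
  rw [h]
  refine sum_congr rfl fun d hd => ?_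
  simp [toArithmeticFunction, Nat.ne_of_gt (Nat.pos_of_mem_divisors hd)]
end

section
/- Cartan decomposition for GL_n over a local ring of integers: let O be a discrete valuation ring with uniformizer π and fraction field K, and let n ≥ 0. For every g ∈ GL_n(K) there exist matrices a, b ∈ GL_n(O) and a weakly decreasing function λ : {1,…,n} → ℤ such that, viewing a and b in GL_n(K) via the inclusion O ⊆ K, g = a · diag(π^{λ_1}, …, π^{λ_n}) · b, where diag(π^{λ_1}, …, π^{λ_n}) is the diagonal matrix whose i-th entry is the (possibly negative) λ_i-th power of the image of π in K. -/
/-!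
Clearing denominators writes `g` as `π ^ (-N)` times a matrix `A` over `O` with nonzero
determinant. The Smith normal form of the full-rank lattice `A(Oⁿ) ⊆ Oⁿ` over the PID `O`
gives `A = P * diagonal d * Q` with `P, Q ∈ GL_n(O)`; in a DVR each `d i` is a unit times
`π ^ m i`, the units are absorbed into `P`, and conjugating by a permutation matrix sorts the
exponents. Then `λ i = m i - N`.
-/

open Matrix Module

section

variable {ι : Type*} [Fintype ι] [DecidableEq ι]

theorem Matrix.exists_eq_GL_mul_diagonal_mul_GL {R : Type*} [CommRing R] [IsDomain R]
    [IsPrincipalIdealRing R] (A : Matrix ι ι R) (hA : A.det ≠ 0) :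
    ∃ (P Q : GL ι R) (d : ι → R), (∀ i, d i ≠ 0) ∧ A = P * diagonal d * Q := by
  let e := LinearEquiv.ofInjective A.mulVecLin (mulVec_injective_of_det_ne_zero hA)
  obtain ⟨b, d, bN, hbN⟩ :=
    Submodule.exists_smith_normal_form_of_rank_eq (Pi.basisFun R ι) e.finrank_eq.symm
  let c : Basis ι R (ι → R) := bN.map e.symm
  have hc : ∀ j, A *ᵥ c j = d j • b j := fun j => by
    rw [← hbN, ← mulVecLin_apply]
    exact congrArg Subtype.val (e.apply_symm_apply (bN j))
  have hdiag : LinearMap.toMatrix c b A.mulVecLin = diagonal d := by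
    ext i j
    rw [LinearMap.toMatrix_apply, mulVecLin_apply, hc, map_smul, b.repr_self,
      Finsupp.smul_apply, Finsupp.single_apply, diagonal_apply]
    by_cases h : i = j
    · simp [h]
    · simp [h, Ne.symm h]
  refine ⟨⟨_, _, (Pi.basisFun R ι).toMatrix_mul_toMatrix_flip b,
      b.toMatrix_mul_toMatrix_flip _⟩,
    ⟨_, _, c.toMatrix_mul_toMatrix_flip _, (Pi.basisFun R ι).toMatrix_mul_toMatrix_flip c⟩,
    d, fun i hi => bN.ne_zero i (Subtype.ext (by simp [hbN, hi])), ?_⟩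
  rw [← hdiag, basis_toMatrix_mul_linearMap_toMatrix_mul_basis_toMatrix,
    LinearMap.toMatrix_eq_toMatrix']
  exact (LinearMap.toMatrix'_toLin' A).symm

theorem Matrix.exists_diagonal_eq_GL_mul_diagonal_comp_mul_GL_inv {R : Type*} [Semiring R]
    (σ : Equiv.Perm ι) (d : ι → R) :
    ∃ S : GL ι R, diagonal d = S * diagonal (d ∘ σ) * S⁻¹.val := by
  refine ⟨permMatrixHom.toHomUnits σ, ?_⟩
  rw [← map_inv, MonoidHom.coe_toHomUnits, MonoidHom.coe_toHomUnits, permMatrixHom_apply,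
    permMatrixHom_apply, inv_inv, PEquiv.toMatrix_toPEquiv_mul, PEquiv.mul_toMatrix_toPEquiv,
    submatrix_submatrix, Function.comp_id, Function.id_comp, Equiv.Perm.inv_def,
    submatrix_diagonal_equiv, Function.comp_assoc, Equiv.self_comp_symm, Function.comp_id]

theorem IsDiscreteValuationRing.exists_diagonal_eq_GL_mul_diagonal_pow {R : Type*} [CommRing R]
    [IsDomain R] [IsDiscreteValuationRing R] {π : R} (hπ : Irreducible π) {d : ι → R}
    (hd : ∀ i, d i ≠ 0) :
    ∃ (U : GL ι R) (m : ι → ℕ), diagonal d = U * diagonal (fun i => π ^ m i) := by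
  choose m u hu using fun i => eq_unit_mul_pow_irreducible (hd i) hπ
  refine ⟨Units.map (diagonalRingHom ι R).toMonoidHom (MulEquiv.piUnits.symm u), m, ?_⟩
  change diagonal d = diagonal (fun i => (u i : R)) * _
  rw [diagonal_mul_diagonal, ← funext hu]

end

theorem IsDiscreteValuationRing.exists_eq_GL_mul_diagonal_pow_mul_GL {R : Type*} [CommRing R]
    [IsDomain R] [IsDiscreteValuationRing R] {π : R} (hπ : Irreducible π) {n : ℕ}
    (A : Matrix (Fin n) (Fin n) R) (hA : A.det ≠ 0) :
    ∃ (P Q : GL (Fin n) R) (m : Fin n → ℕ),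
      Antitone m ∧ A = P * diagonal (fun i => π ^ m i) * Q := by
  obtain ⟨P, Q, d, hd, rfl⟩ := A.exists_eq_GL_mul_diagonal_mul_GL hA
  obtain ⟨U, m, hU⟩ := exists_diagonal_eq_GL_mul_diagonal_pow hπ hd
  let σ := Tuple.sort (OrderDual.toDual ∘ m)
  obtain ⟨S, hS⟩ := exists_diagonal_eq_GL_mul_diagonal_comp_mul_GL_inv σ fun i => π ^ m i
  have hsorted : Antitone (m ∘ σ) := (Tuple.monotone_sort (OrderDual.toDual ∘ m)).dual_right
  refine ⟨P * U * S, S⁻¹ * Q, m ∘ σ, hsorted, ?_⟩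
  rw [hU, hS]
  simp only [Units.val_mul, Matrix.mul_assoc]
  rfl

theorem IsDiscreteValuationRing.exists_map_eq_pow_smul {R K ι : Type*} [CommRing R] [IsDomain R]
    [IsDiscreteValuationRing R] {π : R} (hπ : Irreducible π) [Field K] [Algebra R K]
    [IsFractionRing R K] [Finite ι] (g : Matrix ι ι K) :
    ∃ (A : Matrix ι ι R) (N : ℕ), A.map (algebraMap R K) = algebraMap R K π ^ N • g := by
  obtain ⟨b, hb⟩ := IsLocalization.exist_integer_multiples_of_finite (nonZeroDivisors R)
    fun p : ι × ι => g p.1 p.2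
  choose c hc using hb
  obtain ⟨N, u, hu⟩ := eq_unit_mul_pow_irreducible (nonZeroDivisors.coe_ne_zero b) hπ
  refine ⟨of fun i j => ↑u⁻¹ * c (i, j), N, ?_⟩
  ext i j
  rw [map_apply, of_apply, map_mul, hc (i, j), Algebra.smul_def, hu, Matrix.smul_apply,
    smul_eq_mul, ← mul_assoc, ← map_mul, ← mul_assoc, Units.inv_mul, one_mul, map_pow]

theorem stmt_18 (O : Type*) [CommRing O] [IsDomain O] [IsDiscreteValuationRing O]
    (π : O) (hπ : Irreducible π)
    (K : Type*) [Field K] [Algebra O K] [IsFractionRing O K]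
    (n : ℕ) (g : GL (Fin n) K) :
    ∃ (a b : GL (Fin n) O) (lam : Fin n → ℤ), Antitone lam ∧
      Units.val g =
        (Units.val a).map (algebraMap O K) *
          Matrix.diagonal (fun i => algebraMap O K π ^ lam i) *
          (Units.val b).map (algebraMap O K) := by
  obtain ⟨A, N, hA⟩ := IsDiscreteValuationRing.exists_map_eq_pow_smul hπ g.val
  have hπK : algebraMap O K π ≠ 0 :=
    (map_ne_zero_iff _ (IsFractionRing.injective O K)).mpr hπ.ne_zero
  have hAdet : A.det ≠ 0 := by
    have hmap : algebraMap O K A.det = (algebraMap O K π ^ N) ^ n * g.val.det := by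
      rw [RingHom.map_det, RingHom.mapMatrix_apply, hA, det_smul, Fintype.card_fin]
    intro h
    apply mul_ne_zero (pow_ne_zero n (pow_ne_zero N hπK)) (isUnits_det_units g).ne_zero
    rw [← hmap, h, map_zero]
  obtain ⟨P, Q, m, hm, rfl⟩ :=
    IsDiscreteValuationRing.exists_eq_GL_mul_diagonal_pow_mul_GL hπ A hAdet
  refine ⟨P, Q, fun i => m i - N, fun i j h => by simpa using hm h, ?_⟩
  have hdiag : (algebraMap O K π ^ N)⁻¹ • diagonal (fun i => algebraMap O K (π ^ m i)) =
      diagonal (fun i => algebraMap O K π ^ ((m i : ℤ) - N)) := by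
    rw [← diagonal_smul]
    congr 1
    funext i
    simp [zpow_sub₀ hπK, div_eq_inv_mul]
  rw [← inv_smul_smul₀ (pow_ne_zero N hπK) g.val, ← hA, Matrix.map_mul, Matrix.map_mul,
    diagonal_map (map_zero _), ← smul_mul, ← Matrix.mul_smul, hdiag]
end

section
/- Let V be a finite-dimensional complex vector space and let φ be a unipotent endomorphism of V, i.e. φ - id is nilpotent. Let m be an integer with m ≥ dim V, and let J be the endomorphism of ℂ^m given by the m×m unipotent Jordan block, i.e. the matrix with 1's on the diagonal, 1's on the superdiagonal, and 0's elsewhere. Then the fixed subspace of the endomorphism φ ⊗ J of V ⊗ ℂ^m, i.e. the eigenspace of φ ⊗ J for the eigenvalue 1, has dimension equal to dim V. -/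
/-!
Identify `V ⊗ ℂ^m` with `V^m`. Since `J = 1 + S` with `S` the shift `(Sx)ᵢ = xᵢ₊₁` (and `xₘ = 0`),
a vector `x` is fixed by `φ ⊗ J` iff `φ (xᵢ + xᵢ₊₁) = xᵢ` for all `i`, i.e. iff
`xᵢ₊₁ = T xᵢ` with `T = φ⁻¹ - 1`, together with `T xₘ₋₁ = 0`. The endomorphism `T` is nilpotent,
hence `T ^ m = 0` because `m ≥ dim V`, so the fixed vectors are exactly the `(Tⁱ v)ᵢ`, `v ∈ V`,
and `v ↦ (Tⁱ v)ᵢ` is injective.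
-/

open TensorProduct Module

theorem IsNilpotent.units_inv_sub_one {R : Type*} [Ring R] {u : Rˣ}
    (h : IsNilpotent ((u : R) - 1)) : IsNilpotent ((↑u⁻¹ : R) - 1) := by
  have hcomm : Commute (↑u⁻¹ : R) (1 - u) :=
    ((Commute.one_right (u : R)).sub_right (Commute.refl _)).units_inv_left
  have hprod : (↑u⁻¹ : R) - 1 = ↑u⁻¹ * (1 - u) := by simp [mul_sub]
  rw [hprod]
  exact hcomm.isNilpotent_mul_left (by simpa using h.neg)

theorem IsNilpotent.pow_finrank_eq_zero {K V : Type*} [Field K] [AddCommGroup V]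
    [Module K V] [FiniteDimensional K V] {T : Module.End K V} (hT : IsNilpotent T) :
    T ^ finrank K V = 0 := by
  simpa [hT.charpoly_eq_X_pow_finrank] using T.aeval_self_charpoly

theorem TensorProduct.piScalarRight_map_toLin' {K V ι : Type*} [CommRing K] [AddCommGroup V]
    [Module K V] [Fintype ι] [DecidableEq ι] (φ : V →ₗ[K] V) (M : Matrix ι ι K)
    (t : V ⊗[K] (ι → K)) :
    piScalarRight K K V ι (map φ (Matrix.toLin' M) t) =
      fun i => φ (∑ j, M i j • piScalarRight K K V ι t j) := by
  induction t using TensorProduct.induction_on with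
  | zero => ext; simp
  | tmul v c =>
    ext i
    simp [Matrix.mulVec, dotProduct, Finset.sum_smul, mul_smul]
  | add s t hs ht =>
    ext i
    simp_all [Finset.sum_add_distrib, smul_add]

section Shift

variable {V R : Type*} [AddCommGroup V] [Semiring R] [Module R V] {m : ℕ}

def leftShift (x : Fin m → V) (i : Fin m) : V :=
  if h : (i : ℕ) + 1 < m then x ⟨i + 1, h⟩ else 0

theorem leftShift_castSucc {n : ℕ} (x : Fin (n + 1) → V) (i : Fin n) :
    leftShift x i.castSucc = x i.succ :=
  dif_pos (by simp)

theorem sum_ite_val_eq_add_one (y : Fin m → V) (i : Fin m) :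
    ∑ j : Fin m, (if (j : ℕ) = i + 1 then y j else 0) = leftShift y i := by
  unfold leftShift
  split_ifs with h
  · rw [Finset.sum_eq_single ⟨i + 1, h⟩ (fun j _ hj => if_neg fun hj' => hj (Fin.ext hj'))
      (by simp)]
    simp
  · exact Finset.sum_eq_zero fun j _ => if_neg (by omega)

theorem sum_jordanBlock_smul (y : Fin m → V) (i : Fin m) :
    ∑ j, (Matrix.of fun i j : Fin m =>
      if j = i then (1 : R) else if (j : ℕ) = (i : ℕ) + 1 then 1 else 0) i j • y j =
      y i + leftShift y i := by
  have hsplit : ∀ j, (if j = i then (1 : R) else if (j : ℕ) = (i : ℕ) + 1 then 1 else 0) • y j =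
      (if j = i then y j else 0) + (if (j : ℕ) = i + 1 then y j else 0) := by
    intro j
    rcases eq_or_ne j i with rfl | hji
    · simp
    · simp [hji, ite_smul]
  simp only [Matrix.of_apply, hsplit, Finset.sum_add_distrib, Finset.sum_ite_eq',
    Finset.mem_univ, if_true, sum_ite_val_eq_add_one]

theorem leftShift_pow_apply {T : Module.End R V} (hT : T ^ m = 0) (v : V) (i : Fin m) :
    leftShift (fun j : Fin m => (T ^ (j : ℕ)) v) i = (T ^ ((i : ℕ) + 1)) v := by
  unfold leftShift
  split_ifs with h
  · rfl
  · rw [show (i : ℕ) + 1 = m by omega, hT, LinearMap.zero_apply]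

theorem forall_apply_add_leftShift_eq_iff
    (u : (Module.End R V)ˣ) (hT : ((↑u⁻¹ : Module.End R V) - 1) ^ m = 0) (x : Fin m → V) :
    (∀ i, (u : Module.End R V) (x i + leftShift x i) = x i) ↔
      ∃ v, (fun i : Fin m => (((↑u⁻¹ : Module.End R V) - 1) ^ (i : ℕ)) v) = x := by
  set T : Module.End R V := ↑u⁻¹ - 1
  constructor
  · intro hx
    cases m with
    | zero => exact ⟨0, funext fun i => i.elim0⟩
    | succ n =>
      refine ⟨x 0, funext fun i => ?_⟩
      induction i using Fin.induction with
      | zero => simp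
      | succ i ih =>
        have hstep := congrArg (↑u⁻¹ : Module.End R V) (hx i.castSucc)
        rw [leftShift_castSucc, ← Module.End.mul_apply, u.inv_mul, Module.End.one_apply] at hstep
        rw [Fin.val_castSucc] at ih
        rw [Fin.val_succ, pow_succ', Module.End.mul_apply, ih]
        simp only [T, LinearMap.sub_apply, Module.End.one_apply, ← hstep]
        abel
  · rintro ⟨v, rfl⟩ i
    rw [leftShift_pow_apply hT, pow_succ', Module.End.mul_apply]
    have hinv : ∀ w, w + T w = (↑u⁻¹ : Module.End R V) w := fun w => by simp [T]
    rw [hinv, ← Module.End.mul_apply, u.mul_inv, Module.End.one_apply]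

theorem injective_pi_pow {T : Module.End R V} (hT : T ^ m = 0) :
    Function.Injective (LinearMap.pi fun i : Fin m => T ^ (i : ℕ)) := by
  cases m with
  | zero =>
    intro a b _
    rw [pow_zero] at hT
    exact sub_eq_zero.mp (by simpa using LinearMap.congr_fun hT (a - b))
  | succ n =>
    intro a b hab
    simpa using congrFun hab 0

end Shift

theorem stmt_19 (V : Type*) [AddCommGroup V] [Module ℂ V] [FiniteDimensional ℂ V]
    (φ : V →ₗ[ℂ] V) (hφ : IsNilpotent (φ - LinearMap.id))
    (m : ℕ) (hm : Module.finrank ℂ V ≤ m)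
    (J : (Fin m → ℂ) →ₗ[ℂ] (Fin m → ℂ))
    (hJ : J = Matrix.toLin' (Matrix.of fun i j : Fin m =>
      if j = i then 1 else if (j : ℕ) = (i : ℕ) + 1 then 1 else 0)) :
    Module.finrank ℂ (LinearMap.ker (TensorProduct.map φ J - LinearMap.id)) =
      Module.finrank ℂ V := by
  rw [← Module.End.one_eq_id] at hφ ⊢
  obtain ⟨u, rfl⟩ : IsUnit φ := by simpa using hφ.isUnit_add_one
  set T : Module.End ℂ V := ↑u⁻¹ - 1
  have hT : T ^ m = 0 :=
    pow_eq_zero_of_le hm (hφ.units_inv_sub_one).pow_finrank_eq_zero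
  let E := piScalarRight ℂ ℂ V (Fin m)
  have hker : LinearMap.ker (map (u : Module.End ℂ V) J - 1) =
      LinearMap.range (E.symm.toLinearMap ∘ₗ LinearMap.pi fun i : Fin m => T ^ (i : ℕ)) := by
    ext t
    simp only [LinearMap.mem_ker, LinearMap.sub_apply, Module.End.one_apply, sub_eq_zero,
      LinearMap.mem_range, LinearMap.comp_apply, LinearEquiv.coe_coe, E.symm_apply_eq]
    rw [← E.injective.eq_iff, hJ, piScalarRight_map_toLin', funext_iff]
    simp only [sum_jordanBlock_smul]
    exact forall_apply_add_leftShift_eq_iff u hT _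
  rw [hker, LinearMap.finrank_range_of_inj]
  exact E.symm.injective.comp (injective_pi_pow hT)
end
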